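/- arXiv:0803.0437 — 3 statements merged into one kernel-verified Lean document; each statement's English description precedes it below -/
import Mathlib

section
/- If a and e are integers with a ≥ 2 and e ≥ 3, then (a^e − 1)/(a − 1) has at least ω(e) − 1 distinct prime factors, and at least one prime factor of (a^e − 1)/(a − 1) is congruent to 1 modulo e. -/
/-!
For primes `p ∣ e` the numbers `(a ^ p - 1) / (a - 1)` are pairwise coprime divisors of
`(a ^ e - 1) / (a - 1)`, which gives the bound on `ω`.

A prime `r ∣ Φ_e(a)` with `r ∤ e` has `a` of order exactly `e` modulo `r`, so `r ≡ 1 [MOD e]`.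
Suppose every prime factor of `Φ_e(a)` divides `e`, and write `e = q ^ s * m` with `q ∤ m` for one
of them. Then `a` has order `m` modulo `q`, so `m ∣ q - 1` and `q` is the largest prime factor
of `e`. Hence `Φ_e(a)` is a power of `q`, and lifting the exponent shows `q ^ 2 ∤ Φ_e(a)`, so
`Φ_e(a) = q`. With `b = a ^ q ^ (s - 1)` this reads `q * Φ_m(b) = Φ_m(b ^ q)`, and the estimates
`(x - 1) ^ φ(m) ≤ Φ_m(x) ≤ (x + 1) ^ φ(m)` leave only `b = 2`, `q = 3`, i.e. `(a, e) = (2, 6)`,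
where `7 ∣ 2 ^ 6 - 1` does the job.
-/

open Polynomial Finset

namespace Nat

theorem coprime_pow_sub_one_div_of_coprime {a m n : ℕ} (ha : 1 < a) (hmn : m.Coprime n) :
    ((a ^ m - 1) / (a - 1)).Coprime ((a ^ n - 1) / (a - 1)) := by
  rw [Coprime, Nat.gcd_div (sub_one_dvd_pow_sub_one a m) (sub_one_dvd_pow_sub_one a n),
    pow_sub_one_gcd_pow_sub_one, hmn, pow_one, Nat.div_self (by omega)]

theorem card_le_card_primeFactors_of_pairwise_coprime {ι : Type*} {s : Finset ι} {f : ι → ℕ}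
    {n : ℕ} (hn : n ≠ 0) (hf : ∀ i ∈ s, 1 < f i ∧ f i ∣ n)
    (hcop : (s : Set ι).Pairwise fun i j ↦ Coprime (f i) (f j)) : #s ≤ #n.primeFactors := by
  refine card_le_card_of_injOn (fun i ↦ (f i).minFac) (fun i hi ↦ ?_) fun i hi j hj hij ↦ ?_
  · obtain ⟨hfi, hfin⟩ := hf i hi
    exact mem_primeFactors.2 ⟨minFac_prime hfi.ne', (minFac_dvd _).trans hfin, hn⟩
  · by_contra hne
    refine (minFac_prime (hf i hi).1.ne').ne_one (eq_one_of_dvd_coprimes (hcop hi hj hne)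
      (minFac_dvd _) ?_)
    exact (show (f i).minFac = (f j).minFac from hij) ▸ minFac_dvd _

theorem one_lt_pow_sub_one_div {a n : ℕ} (ha : 2 ≤ a) (hn : 2 ≤ n) : 1 < (a ^ n - 1) / (a - 1) := by
  rw [← geomSum_eq ha]
  calc 1 < ∑ i ∈ range 2, a ^ i := by simp; omega
    _ ≤ _ := sum_le_sum_of_subset (range_subset_range.2 hn)

theorem card_primeFactors_le_card_primeFactors_pow_sub_one_div {a n : ℕ} (ha : 2 ≤ a)
    (hn : n ≠ 0) : #n.primeFactors ≤ #((a ^ n - 1) / (a - 1)).primeFactors := by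
  refine card_le_card_primeFactors_of_pairwise_coprime (f := fun p ↦ (a ^ p - 1) / (a - 1))
    (div_pos (Nat.sub_le_sub_right (le_self_pow hn a) 1) (by omega)).ne' (fun p hp ↦ ?_)
    fun p hp r hr hpr ↦ ?_
  · have hp := mem_primeFactors.1 hp
    exact ⟨one_lt_pow_sub_one_div ha hp.1.two_le, div_dvd_div (sub_one_dvd_pow_sub_one a p)
      (pow_sub_one_dvd_pow_sub_one a hp.2.1)⟩
  · exact coprime_pow_sub_one_div_of_coprime (by omega)
      ((coprime_primes (prime_of_mem_primeFactors hp) (prime_of_mem_primeFactors hr)).2 hpr)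

end Nat

theorem dvd_sub_one_of_prime_dvd_cyclotomic_eval {a : ℤ} {q s m : ℕ} (hq : q.Prime)
    (hqm : ¬q ∣ m) (h : (q : ℤ) ∣ (cyclotomic (q ^ s * m) ℤ).eval a) : m ∣ q - 1 := by
  have := Fact.mk hq
  have : NeZero (m : ZMod q) := ⟨by rwa [Ne, ZMod.natCast_eq_zero_iff]⟩
  have hroot : (cyclotomic (q ^ s * m) (ZMod q)).IsRoot (a : ZMod q) := by
    rw [IsRoot.def, ← eq_intCast (Int.castRingHom (ZMod q)), cyclotomic.eval_apply, eq_intCast,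
      ZMod.intCast_zmod_eq_zero_iff_dvd]
    exact h
  have hprim := isRoot_cyclotomic_prime_pow_mul_iff_of_charP.1 hroot
  exact hprim.eq_orderOf ▸
    ZMod.orderOf_dvd_card_sub_one (hprim.ne_zero (by rintro rfl; simp at hqm))

theorem modEq_one_of_prime_dvd_cyclotomic_eval {a : ℤ} {n r : ℕ} (hr : r.Prime) (hrn : ¬r ∣ n)
    (h : (r : ℤ) ∣ (cyclotomic n ℤ).eval a) : r ≡ 1 [MOD n] :=
  ((Nat.modEq_iff_dvd' hr.one_le).2
    (dvd_sub_one_of_prime_dvd_cyclotomic_eval (s := 0) hr hrn (by simpa using h))).symm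

theorem le_of_prime_dvd_cyclotomic_eval {a : ℤ} {n p q : ℕ} (hn : n ≠ 0) (hq : q.Prime)
    (h : (q : ℤ) ∣ (cyclotomic n ℤ).eval a) (hp : p.Prime) (hpn : p ∣ n) : p ≤ q := by
  obtain ⟨s, m, hqm, rfl⟩ := Nat.exists_eq_pow_mul_and_not_dvd hn q hq.ne_one
  rcases hp.dvd_mul.1 hpn with hpq | hpm
  · exact ((Nat.prime_dvd_prime_iff_eq hp hq).1 (hp.dvd_of_dvd_pow hpq)).le
  · have := Nat.le_of_dvd (Nat.sub_pos_of_lt hq.one_lt)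
      (hpm.trans (dvd_sub_one_of_prime_dvd_cyclotomic_eval hq hqm h))
    omega

theorem cyclotomic_dvd_geom_sum_X_pow {R : Type*} [CommRing R] [IsDomain R] {d n : ℕ}
    (hd : d ∈ n.properDivisors) : cyclotomic n R ∣ ∑ i ∈ range (n / d), (X ^ d) ^ i := by
  obtain ⟨hdn, hlt⟩ := Nat.mem_properDivisors.1 hd
  have hX : (X ^ d - 1 : R[X]) ≠ 0 :=
    (monic_X_pow_sub_C 1 (by rintro rfl; simp at hdn; omega)).ne_zero
  rw [← mul_dvd_mul_iff_left hX, mul_geom_sum, ← pow_mul, Nat.mul_div_cancel' hdn]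
  exact X_pow_sub_one_mul_cyclotomic_dvd_X_pow_sub_one_of_dvd R hd

theorem cyclotomic_mul_prime_pow_eq_expand (R : Type*) [CommRing R] {p n : ℕ} (hp : p.Prime)
    (hpn : p ∣ n) (k : ℕ) : cyclotomic (n * p ^ k) R = expand R (p ^ k) (cyclotomic n R) := by
  induction k with
  | zero => simp
  | succ k ih =>
    rw [pow_succ', expand_mul, ← ih, cyclotomic_expand_eq_cyclotomic hp (dvd_mul_of_dvd_left hpn _),
      mul_assoc, mul_comm p]

theorem not_sq_dvd_geom_sum_of_dvd_sub_one {q : ℕ} (hq : q.Prime) {u : ℤ} (hu : (q : ℤ) ∣ u - 1)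
    (h : Odd q ∨ 4 ∣ u - 1) : ¬(q : ℤ) ^ 2 ∣ ∑ i ∈ range q, u ^ i := by
  rcases hq.eq_two_or_odd' with rfl | hodd
  · have h4 := h.resolve_left (by decide)
    simp only [sum_range_succ, sum_range_zero, pow_zero, pow_one, zero_add]
    push_cast
    omega
  · have hqZ := Nat.prime_iff_prime_int.1 hq
    have hqu : ¬(q : ℤ) ∣ u := fun hqu ↦ hqZ.not_dvd_one (by simpa using dvd_sub hqu hu)
    have hmult := emultiplicity_geom_sum₂_eq_one hqZ hodd (y := 1) hu hqu
    simp only [one_pow, mul_one] at hmult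
    rw [pow_dvd_iff_le_emultiplicity, hmult]
    norm_num

theorem cyclotomic_eval_dvd_pow_sub_one (a : ℤ) (n : ℕ) :
    (cyclotomic n ℤ).eval a ∣ a ^ n - 1 := by
  simpa using eval_dvd (x := a) (cyclotomic.dvd_X_pow_sub_one n ℤ)

theorem four_dvd_pow_div_two_sub_one {a : ℤ} {n : ℕ} (hn : 2 < n)
    (h : 2 ∣ (cyclotomic n ℤ).eval a) : 4 ∣ a ^ (n / 2) - 1 := by
  obtain ⟨s, m, hm2, rfl⟩ := Nat.exists_eq_pow_mul_and_not_dvd (show n ≠ 0 by omega) 2 (by decide)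
  obtain rfl : m = 1 :=
    Nat.dvd_one.1 (dvd_sub_one_of_prime_dvd_cyclotomic_eval Nat.prime_two hm2 (by exact_mod_cast h))
  have hs : 2 ≤ s := by
    by_contra hs
    interval_cases s <;> simp at hn
  have ha : Odd a := by
    have := h.trans (cyclotomic_eval_dvd_pow_sub_one a _)
    exact (Int.odd_pow' (by positivity)).1 (Int.odd_iff.2 (by omega))
  obtain ⟨k, rfl⟩ := Nat.exists_eq_add_of_le hs
  have := Int.sq_mod_four_eq_one_of_odd (ha.pow (n := 2 ^ k))
  rw [show 2 ^ (2 + k) * 1 / 2 = 2 ^ k * 2 by rw [pow_add]; omega, pow_mul]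
  omega

theorem not_sq_dvd_cyclotomic_eval {a : ℤ} {n q : ℕ} (hn : 2 < n) (hq : q.Prime) (hqn : q ∣ n)
    (h : (q : ℤ) ∣ (cyclotomic n ℤ).eval a) : ¬(q : ℤ) ^ 2 ∣ (cyclotomic n ℤ).eval a := by
  set u := a ^ (n / q)
  have hd : n / q ∈ n.properDivisors :=
    Nat.mem_properDivisors.2 ⟨Nat.div_dvd_of_dvd hqn, Nat.div_lt_self (by omega) hq.one_lt⟩
  have hΦu : (cyclotomic n ℤ).eval a ∣ ∑ i ∈ range q, u ^ i := by
    simpa [eval_finsetSum, Nat.div_div_self hqn (by omega), u] using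
      eval_dvd (x := a) (cyclotomic_dvd_geom_sum_X_pow (R := ℤ) hd)
  -- Fermat: `u ≡ u ^ q = a ^ n ≡ 1 [ZMOD q]`.
  have hu : (q : ℤ) ∣ u - 1 := by
    have := Fact.mk hq
    have han := h.trans (cyclotomic_eval_dvd_pow_sub_one a n)
    rw [← ZMod.intCast_zmod_eq_zero_iff_dvd] at han ⊢
    push_cast [u] at han ⊢
    rwa [← ZMod.pow_card ((a : ZMod q) ^ (n / q)), ← pow_mul, Nat.div_mul_cancel hqn]
  refine fun hsq ↦ not_sq_dvd_geom_sum_of_dvd_sub_one hq hu ?_ (hsq.trans hΦu)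
  rcases hq.eq_two_or_odd' with rfl | hodd
  · exact .inr (four_dvd_pow_div_two_sub_one hn (by exact_mod_cast h))
  · exact .inl hodd

theorem Nat.eq_two_and_eq_three_of_pow_le {b q : ℕ} (hb : 2 ≤ b) (hq : 3 ≤ q)
    (h : b ^ q ≤ q * (b + 1) + 1) : b = 2 ∧ q = 3 := by
  rcases (by omega : q = 3 ∨ 4 ≤ q) with rfl | hq4
  · refine ⟨?_, rfl⟩
    by_contra hb2
    have : 9 * b ≤ b ^ 3 := calc
      9 * b = 3 * 3 * b := by ring
      _ ≤ b * b * b := by gcongr <;> omega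
      _ = b ^ 3 := by ring
    omega
  · suffices q * (b + 1) + 1 < b ^ q by omega
    clear h hq
    induction q, hq4 using Nat.le_induction with
    | base => nlinarith [pow_succ b 3, Nat.pow_le_pow_left hb 3]
    | succ q hq4 ih =>
      rw [pow_succ]
      nlinarith [ih, Nat.mul_le_mul_left (b ^ q) hb]

theorem eq_two_and_eq_three_of_cyclotomic_eval_pow_le {b m q : ℕ} (hb : 2 ≤ b) (hq : 3 ≤ q)
    (hm : m ≠ 0) (h : (cyclotomic m ℤ).eval ((b : ℤ) ^ q) ≤ q * (cyclotomic m ℤ).eval (b : ℤ)) :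
    b = 2 ∧ q = 3 := by
  refine Nat.eq_two_and_eq_three_of_pow_le hb hq ?_
  have hcast (x : ℤ) : (cyclotomic m ℝ).eval (x : ℝ) = (cyclotomic m ℤ).eval x :=
    cyclotomic.eval_apply x m (Int.castRingHom ℝ)
  have hR : (cyclotomic m ℝ).eval ((b : ℝ) ^ q) ≤ q * (cyclotomic m ℝ).eval (b : ℝ) := by
    have h' := (Int.cast_le (R := ℝ)).2 h
    rw [Int.cast_mul, ← hcast, ← hcast] at h'
    simpa using h'
  have hb1 : (1 : ℝ) < b := by exact_mod_cast hb
  have hφ : m.totient ≠ 0 := (Nat.totient_pos.2 (Nat.pos_of_ne_zero hm)).ne'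
  have hpow : ((b : ℝ) ^ q - 1) ^ m.totient ≤ (q * (b + 1)) ^ m.totient := calc
    _ ≤ (cyclotomic m ℝ).eval ((b : ℝ) ^ q) :=
      sub_one_pow_totient_le_cyclotomic_eval (one_lt_pow₀ hb1 (by omega)) m
    _ ≤ q * (cyclotomic m ℝ).eval (b : ℝ) := hR
    _ ≤ q * (b + 1) ^ m.totient := by gcongr; exact cyclotomic_eval_le_add_one_pow_totient hb1 m
    _ ≤ q ^ m.totient * (b + 1) ^ m.totient := by
      gcongr; exact le_self_pow₀ (by norm_cast; omega) hφ
    _ = _ := (mul_pow ..).symm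
  have := (pow_le_pow_iff_left₀ (by nlinarith [one_lt_pow₀ hb1 (by omega : q ≠ 0)])
    (by positivity) hφ).1 hpow
  exact_mod_cast (by linarith : ((b : ℝ) ^ q) ≤ q * (b + 1) + 1)

theorem exists_prime_dvd_and_cyclotomic_eval_eq {a e : ℕ} (ha : 2 ≤ a) (he : 2 < e)
    (h : ∀ r : ℕ, r.Prime → (r : ℤ) ∣ (cyclotomic e ℤ).eval (a : ℤ) → r ∣ e) :
    ∃ q : ℕ, q.Prime ∧ q ∣ e ∧ (cyclotomic e ℤ).eval (a : ℤ) = q := by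
  have hΦ : 1 < ((cyclotomic e ℤ).eval (a : ℤ)).natAbs := by
    have := sub_one_lt_natAbs_cyclotomic_eval (n := e) (q := a) (by omega) (by omega)
    omega
  have hpos : 0 < (cyclotomic e ℤ).eval (a : ℤ) := cyclotomic_pos he _
  set Φ := (cyclotomic e ℤ).eval (a : ℤ)
  set q := Φ.natAbs.minFac
  have hq : q.Prime := Nat.minFac_prime hΦ.ne'
  have hqΦ : (q : ℤ) ∣ Φ := Int.natCast_dvd.2 (Nat.minFac_dvd _)
  have hqe := h q hq hqΦ
  have hunique {r : ℕ} (hr : r.Prime) (hrΦ : r ∣ Φ.natAbs) : r = q := by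
    have hrΦ' : (r : ℤ) ∣ Φ := Int.natCast_dvd.2 hrΦ
    exact le_antisymm (le_of_prime_dvd_cyclotomic_eval (by omega) hq hqΦ hr (h r hr hrΦ'))
      (le_of_prime_dvd_cyclotomic_eval (by omega) hr hrΦ' hq hqe)
  obtain ⟨t, ht⟩ : ∃ t, Φ.natAbs = q ^ t :=
    ⟨_, Nat.eq_prime_pow_of_unique_prime_dvd (by omega) hunique⟩
  have ht1 : t = 1 := by
    have ht0 : t ≠ 0 := by rintro rfl; simp at ht; omega
    by_contra ht1
    refine not_sq_dvd_cyclotomic_eval he hq hqe hqΦ (Int.natCast_dvd.2 ?_)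
    exact ht ▸ pow_dvd_pow q (by omega)
  refine ⟨q, hq, hqe, ?_⟩
  rw [← Int.natAbs_of_nonneg hpos.le, ht, ht1, pow_one]

theorem eq_two_and_eq_six_of_cyclotomic_eval_eq_prime {a e q : ℕ} (ha : 2 ≤ a) (hq : q.Prime)
    (hqe : q ∣ e) (h : (cyclotomic e ℤ).eval (a : ℤ) = q) : a = 2 ∧ e = 6 := by
  have he : e ≠ 0 := by rintro rfl; simp at h; exact hq.one_lt.ne (by exact_mod_cast h)
  obtain ⟨s, m, hqm, rfl⟩ := Nat.exists_eq_pow_mul_and_not_dvd he q hq.ne_one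
  have hs : s ≠ 0 := by rintro rfl; exact hqm (by simpa using hqe)
  have hm : m ∣ q - 1 := dvd_sub_one_of_prime_dvd_cyclotomic_eval hq hqm (by rw [h])
  set b := a ^ q ^ (s - 1) with hbdef
  have hb2 : 2 ≤ b := ha.trans (Nat.le_self_pow (pow_ne_zero _ hq.ne_zero) a)
  have hΦb : (cyclotomic (m * q) ℤ).eval (b : ℤ) = q := by
    rw [← h, show q ^ s * m = m * q * q ^ (s - 1) by
        rw [mul_assoc, ← pow_succ', Nat.sub_add_cancel (by omega), mul_comm],
      cyclotomic_mul_prime_pow_eq_expand ℤ hq (dvd_mul_left q m), expand_eval, hbdef]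
    push_cast
    rfl
  have hmul : q * (cyclotomic m ℤ).eval (b : ℤ) = (cyclotomic m ℤ).eval ((b : ℤ) ^ q) := by
    rw [← hΦb, ← eval_mul, ← cyclotomic_expand_eq_cyclotomic_mul hq hqm, expand_eval]
  rcases hq.eq_two_or_odd' with rfl | hodd
  · obtain rfl : m = 1 := Nat.dvd_one.1 hm
    simp at hΦb
    omega
  obtain ⟨hb, rfl⟩ := eq_two_and_eq_three_of_cyclotomic_eval_pow_le hb2
    (by have := hq.two_le; rcases hodd with ⟨k, hk⟩; omega) (by rintro rfl; simp at hqm) hmul.ge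
  obtain ⟨rfl, hs1⟩ := Nat.prime_two.pow_eq_iff.1 (hbdef.symm.trans hb)
  obtain rfl : s = 1 := by rw [Nat.pow_eq_one] at hs1; omega
  refine ⟨rfl, ?_⟩
  have : m ≤ 2 := Nat.le_of_dvd two_pos hm
  interval_cases m
  · simp at hqm
  · simp [hb] at hmul
  · rfl

theorem cyclotomic_eval_dvd_pow_sub_one_div {a n : ℕ} (ha : 2 ≤ a) (hn : n ≠ 1) :
    (cyclotomic n ℤ).eval (a : ℤ) ∣ ((a ^ n - 1) / (a - 1) : ℕ) := by
  rw [← Nat.geomSum_eq ha]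
  push_cast
  simpa [eval_finsetSum] using eval_dvd (x := (a : ℤ)) (cyclotomic_dvd_geom_sum_of_dvd ℤ dvd_rfl hn)

/-- If `a` and `e` are integers with `a ≥ 2` and `e ≥ 3`, then `(a^e − 1)/(a − 1)` has at
least `ω(e) − 1` distinct prime factors, and at least one prime factor of
`(a^e − 1)/(a − 1)` is congruent to `1` modulo `e`. -/
theorem stmt_4 (a e : ℕ) (ha : 2 ≤ a) (he : 3 ≤ e) :
    e.primeFactors.card - 1 ≤ ((a ^ e - 1) / (a - 1)).primeFactors.card ∧
    ∃ q : ℕ, q.Prime ∧ q ∣ (a ^ e - 1) / (a - 1) ∧ q ≡ 1 [MOD e] := by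
  refine ⟨(Nat.sub_le _ 1).trans
    (Nat.card_primeFactors_le_card_primeFactors_pow_sub_one_div ha (by omega)), ?_⟩
  by_cases hex : ∃ r : ℕ, r.Prime ∧ (r : ℤ) ∣ (cyclotomic e ℤ).eval (a : ℤ) ∧ ¬r ∣ e
  · obtain ⟨r, hr, hrΦ, hre⟩ := hex
    exact ⟨r, hr, Int.natCast_dvd_natCast.1
      (hrΦ.trans (cyclotomic_eval_dvd_pow_sub_one_div ha (by omega))),
      modEq_one_of_prime_dvd_cyclotomic_eval hr hre hrΦ⟩
  · push Not at hex
    obtain ⟨q, hq, hqe, hΦq⟩ := exists_prime_dvd_and_cyclotomic_eval_eq ha he hex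
    obtain ⟨rfl, rfl⟩ := eq_two_and_eq_six_of_cyclotomic_eval_eq_prime ha hq hqe hΦq
    exact ⟨7, by norm_num, by norm_num, by decide⟩
end

section
/- Let p₀, p₁, p₂ be distinct primes with p₂ > p₁ and let s be a positive integer. If e is an integer with e > 3s², and there exist positive integers f₁, f₂ such that p₀^{f_i} divides σ(p_i^{e−1}) and p₀^{f_i} ≥ σ(p_i^{e−1})^{1/s} for i = 1, 2, then log p₂ > (9/8)·log p₁. -/
/-!
Write `K = e - 1`, so that `σ(p^K) = 1 + p + ⋯ + p^K` lies in `(p^K, (p₀^f)^s]` and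
`p^(K+1) ≡ 1 (mod p₀^f)` for `(p, f) = (p₁, f₁), (p₂, f₂)`.

If `p₀ = 2`, lifting the exponent bounds the `2`-part of `1 + p₁ + ⋯ + p₁^K` by
`(p₁ + 1)(K + 1)`, which is far below `p₁^(K/s)` because `K ≥ 3s²`.

If `p₀` is odd, `(ℤ/p₀^m)ˣ` is cyclic for `m = min f₁ f₂`, so at most `K + 1` residues
satisfy `z^(K+1) = 1`. If `p₂^8 ≤ p₁^9`, every product `p₁^x p₂^y` with
`8sx + 9sy ≤ 8K` is below `p₀^m`; these products are distinct residues solving that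
equation, and a lattice-point count gives at least `K + 2` of them.
-/

open Finset ArithmeticFunction
open scoped ArithmeticFunction.sigma

lemma card_pow_eq_one_le {M : Type*} [Monoid M] [Fintype M] [DecidableEq M] [IsCyclic Mˣ]
    {n : ℕ} (hn : 0 < n) : #{z : M | z ^ n = 1} ≤ n := by
  have hsub : ({z : M | z ^ n = 1} : Finset M) ⊆
      ({u : Mˣ | u ^ n = 1} : Finset Mˣ).image Units.val := by
    intro z hz
    have hz : z ^ n = 1 := (mem_filter.1 hz).2
    obtain ⟨u, rfl⟩ := IsUnit.of_pow_eq_one hz hn.ne'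
    exact mem_image.2 ⟨u, mem_filter.2 ⟨mem_univ _, Units.ext (by simpa using hz)⟩, rfl⟩
  exact (card_le_card hsub).trans (card_image_le.trans (IsCyclic.card_pow_eq_one_le hn))

lemma card_le_of_forall_natCast_pow_eq_one {N n : ℕ} [NeZero N] [IsCyclic (ZMod N)ˣ]
    (hn : 0 < n) {S : Finset ℕ} (hS : ∀ u ∈ S, u < N ∧ (u : ZMod N) ^ n = 1) :
    #S ≤ n := by
  refine le_trans ?_ (card_pow_eq_one_le (M := ZMod N) hn)
  refine card_le_card_of_injOn (↑) (fun u hu => by simp [(hS u hu).2]) ?_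
  intro u hu v hv huv
  rw [← ZMod.val_cast_of_lt (hS u hu).1, ← ZMod.val_cast_of_lt (hS v hv).1, huv]

lemma Nat.Prime.pow_mul_pow_injective {p q : ℕ} (hp : p.Prime) (hq : q.Prime) (hpq : p ≠ q) :
    Function.Injective fun x : ℕ × ℕ => p ^ x.1 * q ^ x.2 := by
  intro x y hxy
  have hval : ∀ x : ℕ × ℕ, (p ^ x.1 * q ^ x.2).factorization p = x.1 ∧
      (p ^ x.1 * q ^ x.2).factorization q = x.2 := fun x => by
    rw [Nat.factorization_mul (pow_ne_zero _ hp.ne_zero) (pow_ne_zero _ hq.ne_zero),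
      hp.factorization_pow, hq.factorization_pow]
    simp [hpq, hpq.symm]
  simp only at hxy
  exact Prod.ext ((hval x).1.symm.trans (hxy ▸ (hval y).1))
    ((hval x).2.symm.trans (hxy ▸ (hval y).2))

lemma natCast_pow_eq_one_of_dvd_sigma {d p K : ℕ} (hp : p.Prime) (hd : d ∣ σ 1 (p ^ K)) :
    (p : ZMod d) ^ (K + 1) = 1 := by
  rw [sigma_one_apply_prime_pow hp, ← ZMod.natCast_eq_zero_iff] at hd
  push_cast at hd
  rw [← sub_eq_zero, ← geom_sum_mul, hd, zero_mul]

lemma pow_lt_pow_of_rpow_sigma_le {p b s K : ℕ} (hp : p.Prime) (hK : 0 < K) (hs : 0 < s)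
    (h : ((σ 1 (p ^ K) : ℕ) : ℝ) ^ ((1 : ℝ) / s) ≤ (b : ℝ)) : p ^ K < b ^ s := by
  rw [one_div, Real.rpow_inv_le_iff_of_pos (by positivity) (by positivity) (by positivity),
    Real.rpow_natCast] at h
  refine lt_of_lt_of_le ?_ (by exact_mod_cast h)
  rw [sigma_one_apply_prime_pow hp, sum_range_succ]
  exact Nat.lt_add_of_pos_left
    (sum_pos (fun i _ => pow_pos hp.pos i) (nonempty_range_iff.2 hK.ne'))

lemma two_pow_succ_le_of_dvd_geom_sum {q n g : ℕ} (hq : Odd q) (hn : n ≠ 0)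
    (h : 2 ^ g ∣ ∑ i ∈ range n, q ^ i) : 2 ^ (g + 1) ≤ (q + 1) * n := by
  rcases Nat.even_or_odd n with hne | hno
  · obtain ⟨r, rfl⟩ : ∃ r, q = r + 1 := ⟨q - 1, by have := hq.pos; omega⟩
    set S := ∑ i ∈ range n, (r + 1) ^ i
    have hS : S ≠ 0 := (sum_pos (fun i _ => by positivity) (nonempty_range_iff.2 hn)).ne'
    obtain rfl | hr := Nat.eq_zero_or_pos r
    · simp only [zero_add, one_pow, sum_const, card_range, smul_eq_mul, mul_one, S] at h ⊢
      have := Nat.le_of_dvd (Nat.pos_of_ne_zero hn) h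
      rw [pow_succ]
      omega
    have hgeom : (r + 1) ^ n - 1 = S * r := by
      rw [← geom_sum_mul_add r n, Nat.add_sub_cancel]
    -- Lifting the exponent, with `S (q - 1) = q^n - 1`: `v₂(S) + 1 = v₂(q + 1) + v₂(n)`.
    have hlte := padicValNat.pow_two_sub_one (x := r + 1) (by omega)
      (by rw [← even_iff_two_dvd, Nat.not_even_iff_odd]; exact hq) hn hne
    rw [hgeom, padicValNat.mul hS hr.ne', Nat.add_sub_cancel] at hlte
    have hg : g ≤ padicValNat 2 S := (padicValNat_dvd_iff_le hS).1 h
    calc 2 ^ (g + 1) ≤ 2 ^ (padicValNat 2 S + 1) := Nat.pow_le_pow_right two_pos (by omega)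
      _ = 2 ^ padicValNat 2 (r + 1 + 1) * 2 ^ padicValNat 2 n := by
        rw [← pow_add]; congr 1; omega
      _ ≤ (r + 1 + 1) * n :=
        Nat.mul_le_mul (Nat.le_of_dvd (by omega) pow_padicValNat_dvd)
          (Nat.le_of_dvd (Nat.pos_of_ne_zero hn) pow_padicValNat_dvd)
  · have hodd : Odd (∑ i ∈ range n, q ^ i) := by
      rw [← ZMod.natCast_eq_one_iff_odd]
      push_cast
      simp [hq.natCast_zmod_two, hno.natCast_zmod_two]
    obtain rfl : g = 0 := by
      by_contra hg
      exact Nat.not_even_iff_odd.2 hodd (even_iff_two_dvd.2 ((dvd_pow_self 2 hg).trans h))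
    have := hq.pos
    have := Nat.pos_of_ne_zero hn
    rw [zero_add, pow_one]
    nlinarith

lemma four_mul_mul_succ_lt_three_pow {q : ℕ} (hq : 3 ≤ q) : 4 * q * (q + 1) < 3 ^ (q + 1) := by
  induction q, hq using Nat.le_induction with
  | base => norm_num
  | succ q _ ih => rw [pow_succ]; nlinarith

lemma succ_mul_succ_pow_lt_pow {p s K : ℕ} (hp : 3 ≤ p) (hs : 0 < s) (hK : 3 * s ^ 2 ≤ K) :
    ((p + 1) * (K + 1)) ^ s < p ^ K := by
  -- With `q = ⌊K/s⌋ ≥ 3s` it suffices that `(p + 1)(K + 1) < p^q`.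
  set q := K / s
  have hsq : 3 * s ≤ q := (Nat.le_div_iff_mul_le hs).2 (by nlinarith)
  have hKq : K + 1 ≤ s * (q + 1) := Nat.lt_mul_div_succ K hs
  have h3p : 3 ^ (q - 1) ≤ p ^ (q - 1) := Nat.pow_le_pow_left hp _
  have hpq : p ^ q = p * p ^ (q - 1) := by rw [← pow_succ', Nat.sub_add_cancel (by omega)]
  have h3q : 3 ^ (q + 1) = 9 * 3 ^ (q - 1) := by
    rw [show q + 1 = q - 1 + 2 by omega, pow_add]; ring
  have key : (p + 1) * (K + 1) < p ^ q := by
    have := four_mul_mul_succ_lt_three_pow (q := q) (by omega)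
    have h1 : 3 * (K + 1) ≤ q * (q + 1) := by nlinarith
    nlinarith
  calc ((p + 1) * (K + 1)) ^ s < (p ^ q) ^ s := Nat.pow_lt_pow_left key hs.ne'
    _ = p ^ (s * q) := by rw [← pow_mul, mul_comm]
    _ ≤ p ^ K := Nat.pow_le_pow_right (by omega) (Nat.mul_div_le K s)

lemma two_pow_pow_lt_of_dvd_sigma {p s K f : ℕ} (hp : p.Prime) (hp2 : p ≠ 2) (hs : 0 < s)
    (hK : 3 * s ^ 2 ≤ K) (hd : 2 ^ f ∣ σ 1 (p ^ K)) : (2 ^ f) ^ s < p ^ K := by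
  rw [sigma_one_apply_prime_pow hp] at hd
  have h2f : 2 ^ f ≤ (p + 1) * (K + 1) := (Nat.pow_le_pow_right two_pos f.le_succ).trans
    (two_pow_succ_le_of_dvd_geom_sum (hp.odd_of_ne_two hp2) K.succ_ne_zero hd)
  exact (Nat.pow_le_pow_left h2f s).trans_lt
    (succ_mul_succ_pow_lt_pow (hp.two_le.lt_of_ne hp2.symm) hs hK)

-- The weights encode `b ≤ a^(9/8)`: for these exponents `a^x b^y ≤ a^(K/s)`.
def exponentTriangle (s K : ℕ) : Finset (ℕ × ℕ) :=
  {q ∈ range (K + 1) ×ˢ range (K + 1) | 8 * s * q.1 + 9 * s * q.2 ≤ 8 * K}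

lemma eight_mul_lt_card_row {s K : ℕ} (hs : 0 < s) (y : ℕ) :
    8 * K < 8 * s * #{x ∈ range (K + 1) | 8 * s * x + 9 * s * y ≤ 8 * K} + 9 * s * y := by
  set c := #{x ∈ range (K + 1) | 8 * s * x + 9 * s * y ≤ 8 * K}
  by_contra! h
  have hsub : range (c + 1) ⊆ {x ∈ range (K + 1) | 8 * s * x + 9 * s * y ≤ 8 * K} := by
    intro x hx
    have hxc : x ≤ c := Nat.lt_succ_iff.1 (mem_range.1 hx)
    have hsx : 8 * s * x ≤ 8 * s * c := Nat.mul_le_mul_left _ hxc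
    simp only [mem_filter, mem_range]
    constructor <;> nlinarith
  exact Nat.not_succ_le_self c (by simpa only [card_range] using card_le_card hsub)

lemma add_two_le_card_exponentTriangle {s K : ℕ} (hs : 0 < s) (hK : 3 * s ^ 2 ≤ K) :
    K + 2 ≤ #(exponentTriangle s K) := by
  set row := fun y => #{x ∈ range (K + 1) | 8 * s * x + 9 * s * y ≤ 8 * K}
  have hcard : #(exponentTriangle s K) = ∑ y ∈ range (K + 1), row y := by
    simp only [exponentTriangle, row, card_filter, sum_product_right]
  have hrows : ∑ y ∈ range (2 * s), row y ≤ ∑ y ∈ range (K + 1), row y :=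
    sum_le_sum_of_subset (range_subset_range.2 (by nlinarith))
  have hsum : ∑ _y ∈ range (2 * s), (8 * K + 1) ≤
      ∑ y ∈ range (2 * s), (8 * s * row y + 9 * s * y) :=
    sum_le_sum fun y _ => eight_mul_lt_card_row hs y
  rw [sum_const, card_range, smul_eq_mul, sum_add_distrib, ← mul_sum, ← mul_sum] at hsum
  have hgauss : (∑ y ∈ range (2 * s), y) * 2 + 2 * s = 4 * s ^ 2 := by
    obtain ⟨t, ht⟩ : ∃ t, 2 * s = t + 1 := ⟨2 * s - 1, by omega⟩
    rw [sum_range_id_mul_two, show 4 * s ^ 2 = (2 * s) ^ 2 by ring, ht, Nat.add_sub_cancel]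
    ring
  rw [hcard]
  refine le_trans ?_ hrows
  generalize ∑ y ∈ range (2 * s), row y = R at hsum ⊢
  generalize ∑ y ∈ range (2 * s), y = Y at hsum hgauss
  refine Nat.le_of_mul_le_mul_left ?_ (by positivity : 0 < 16 * s)
  nlinarith

lemma pow_mul_pow_lt {a b N s K x y : ℕ} (ha : 0 < a) (hab : b ^ 8 ≤ a ^ 9) (hN : a ^ K < N ^ s)
    (hxy : 8 * s * x + 9 * s * y ≤ 8 * K) : a ^ x * b ^ y < N := by
  refine lt_of_pow_lt_pow_left₀ (8 * s) (Nat.zero_le _) ?_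
  calc (a ^ x * b ^ y) ^ (8 * s) = a ^ (8 * s * x) * (b ^ 8) ^ (s * y) := by ring
    _ ≤ a ^ (8 * s * x) * (a ^ 9) ^ (s * y) :=
        Nat.mul_le_mul_left _ (Nat.pow_le_pow_left hab _)
    _ = a ^ (8 * s * x + 9 * s * y) := by ring
    _ ≤ (a ^ K) ^ 8 := by rw [← pow_mul]; exact Nat.pow_le_pow_right ha (by linarith)
    _ < (N ^ s) ^ 8 := Nat.pow_lt_pow_left hN (by norm_num)
    _ = N ^ (8 * s) := by ring

lemma pow_nine_lt_pow_eight {N a b s K : ℕ} [NeZero N] [IsCyclic (ZMod N)ˣ]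
    (ha : a.Prime) (hb : b.Prime) (hab : a ≠ b) (hs : 0 < s) (hK : 3 * s ^ 2 ≤ K)
    (ha1 : (a : ZMod N) ^ (K + 1) = 1) (hb1 : (b : ZMod N) ^ (K + 1) = 1) (hN : a ^ K < N ^ s) :
    a ^ 9 < b ^ 8 := by
  by_contra! hba
  have hcard : #((exponentTriangle s K).image fun q => a ^ q.1 * b ^ q.2) ≤ K + 1 := by
    refine card_le_of_forall_natCast_pow_eq_one (N := N) (Nat.succ_pos K) fun u hu => ?_
    obtain ⟨q, hq, rfl⟩ := mem_image.1 hu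
    refine ⟨pow_mul_pow_lt ha.pos hba hN (mem_filter.1 hq).2, ?_⟩
    push_cast
    rw [mul_pow, ← pow_mul, ← pow_mul, mul_comm q.1, mul_comm q.2, pow_mul, pow_mul, ha1, hb1,
      one_pow, one_pow, one_mul]
  rw [card_image_of_injective _ (ha.pow_mul_pow_injective hb hab)] at hcard
  have := add_two_le_card_exponentTriangle hs hK
  omega

lemma nine_div_eight_mul_log_lt_log {a b : ℕ} (ha : 0 < a) (h : a ^ 9 < b ^ 8) :
    9 / 8 * Real.log a < Real.log b := by
  have h' : ((a : ℝ) ^ 9) < (b : ℝ) ^ 8 := by exact_mod_cast h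
  have hlog := Real.log_lt_log (by positivity) h'
  rw [Real.log_pow, Real.log_pow] at hlog
  push_cast at hlog
  linarith

theorem stmt_6_general (p₀ p₁ p₂ s e f₁ f₂ : ℕ) (hp₀ : p₀.Prime) (hp₁ : p₁.Prime)
    (hp₂ : p₂.Prime) (h01 : p₀ ≠ p₁) (h12 : p₁ < p₂)
    (hs : 0 < s) (he : 3 * s ^ 2 < e)
    (hd₁ : p₀ ^ f₁ ∣ σ 1 (p₁ ^ (e - 1)))
    (hd₂ : p₀ ^ f₂ ∣ σ 1 (p₂ ^ (e - 1)))
    (hg₁ : ((σ 1 (p₁ ^ (e - 1)) : ℕ) : ℝ) ^ ((1 : ℝ) / s) ≤ ((p₀ ^ f₁ : ℕ) : ℝ))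
    (hg₂ : ((σ 1 (p₂ ^ (e - 1)) : ℕ) : ℝ) ^ ((1 : ℝ) / s) ≤ ((p₀ ^ f₂ : ℕ) : ℝ)) :
    Real.log p₂ > 9 / 8 * Real.log p₁ := by
  obtain ⟨K, rfl⟩ : ∃ K, e = K + 1 := ⟨e - 1, by omega⟩
  have hK : 3 * s ^ 2 ≤ K := by omega
  rw [Nat.add_sub_cancel] at hd₁ hd₂ hg₁ hg₂
  have hlt₁ := pow_lt_pow_of_rpow_sigma_le hp₁ (by nlinarith) hs hg₁
  have hlt₂ := pow_lt_pow_of_rpow_sigma_le hp₂ (by nlinarith) hs hg₂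
  rcases eq_or_ne p₀ 2 with rfl | hodd
  · exact absurd hlt₁ (two_pow_pow_lt_of_dvd_sigma hp₁ h01.symm hs hK hd₁).asymm
  have := ZMod.isCyclic_units_of_prime_pow p₀ hp₀ hodd (min f₁ f₂)
  have : NeZero (p₀ ^ min f₁ f₂) := ⟨pow_ne_zero _ hp₀.ne_zero⟩
  have hmono : Monotone fun f => (p₀ ^ f) ^ s := fun a b h =>
    Nat.pow_le_pow_left (Nat.pow_le_pow_right hp₀.pos h) s
  have hN : p₁ ^ K < (p₀ ^ min f₁ f₂) ^ s := by
    rw [hmono.map_min]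
    exact lt_min hlt₁ ((Nat.pow_le_pow_left h12.le K).trans_lt hlt₂)
  have h1 := natCast_pow_eq_one_of_dvd_sigma hp₁
    ((pow_dvd_pow p₀ (min_le_left f₁ f₂)).trans hd₁)
  have h2 := natCast_pow_eq_one_of_dvd_sigma hp₂
    ((pow_dvd_pow p₀ (min_le_right f₁ f₂)).trans hd₂)
  exact nine_div_eight_mul_log_lt_log hp₁.pos
    (pow_nine_lt_pow_eight hp₁ hp₂ h12.ne hs hK h1 h2 hN)

/-- Let `p₀, p₁, p₂` be distinct primes with `p₂ > p₁` and let `s` be a positive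
integer. If `e` is an integer with `e > 3s²`, and there exist positive integers
`f₁, f₂` such that `p₀^{f_i}` divides `σ(p_i^{e−1})` and
`p₀^{f_i} ≥ σ(p_i^{e−1})^{1/s}` for `i = 1, 2`, then `log p₂ > (9/8)·log p₁`. -/
theorem stmt_6 (p₀ p₁ p₂ s e f₁ f₂ : ℕ) (hp₀ : p₀.Prime) (hp₁ : p₁.Prime)
    (hp₂ : p₂.Prime) (h01 : p₀ ≠ p₁) (h02 : p₀ ≠ p₂) (h12 : p₁ < p₂)
    (hs : 0 < s) (he : 3 * s ^ 2 < e) (hf₁ : 0 < f₁) (hf₂ : 0 < f₂)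
    (hd₁ : p₀ ^ f₁ ∣ σ 1 (p₁ ^ (e - 1)))
    (hd₂ : p₀ ^ f₂ ∣ σ 1 (p₂ ^ (e - 1)))
    (hg₁ : ((σ 1 (p₁ ^ (e - 1)) : ℕ) : ℝ) ^ ((1 : ℝ) / s) ≤ ((p₀ ^ f₁ : ℕ) : ℝ))
    (hg₂ : ((σ 1 (p₂ ^ (e - 1)) : ℕ) : ℝ) ^ ((1 : ℝ) / s) ≤ ((p₀ ^ f₂ : ℕ) : ℝ)) :
    Real.log p₂ > 9 / 8 * Real.log p₁ :=
  stmt_6_general p₀ p₁ p₂ s e f₁ f₂ hp₀ hp₁ hp₂ h01 h12 hs he hd₁ hd₂ hg₁ hg₂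
end

section
/- Let q₁, …, q_k be distinct primes, I a nonempty subset of {1, …, k}, and let e ≥ 3 be an integer. If p is a prime and a_i (i ∈ I) are positive integers with (p^e − 1)/(p − 1) = ∏_{i∈I} q_i^{a_i}, then e divides q_i − 1 for some i ∈ I, and ω(e) ≤ |I| + 1. -/
open scoped BigOperators

open Finset Polynomial


lemma aux_lt_two_pow_pred : ∀ n : ℕ, 3 ≤ n → n < 2 ^ (n - 1) := by
  intro n hn
  induction n with
  | zero => omega
  | succ m ih =>
    rcases Nat.lt_or_ge m 3 with h | h
    · interval_cases m <;> simp_all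
    · have := ih (by omega)
      have hm : 2 ^ (m - 1) * 2 = 2 ^ (m + 1 - 1) := by
        rw [← pow_succ]; congr 1; omega
      omega

lemma aux_four_mul_lt : ∀ n : ℕ, 5 ≤ n → 4 * n < 2 ^ n := by
  intro n hn
  induction n with
  | zero => omega
  | succ m ih =>
    rcases Nat.lt_or_ge m 5 with h | h
    · interval_cases m <;> simp_all
    · have := ih (by omega)
      have h2 : 2 ^ m * 2 = 2 ^ (m+1) := by rw [pow_succ]
      omega

lemma aux_le_two_pow_pred : ∀ n : ℕ, 1 ≤ n → n ≤ 2 ^ (n - 1) := by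
  intro n hn
  rcases Nat.lt_or_ge n 3 with h | h
  · interval_cases n <;> norm_num
  · exact (aux_lt_two_pow_pred n h).le

lemma aux_dvd_iff {p r ℓ : ℕ} (hp : 1 ≤ p) : ℓ ∣ p ^ r - 1 ↔ ((p : ZMod ℓ))^r = 1 := by
  rw [← ZMod.natCast_eq_zero_iff, Nat.cast_sub (Nat.one_le_pow _ _ hp),
    sub_eq_zero, Nat.cast_pow, Nat.cast_one, eq_comm]

lemma aux_dvd_iff_one {p ℓ : ℕ} (hp : 1 ≤ p) : ℓ ∣ p - 1 ↔ ((p : ZMod ℓ)) = 1 := by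
  have := aux_dvd_iff (r := 1) (ℓ := ℓ) hp
  simpa using this

lemma aux_gcd {p r₁ r₂ ℓ : ℕ} (hp : 1 ≤ p) (h1 : r₁.Prime) (h2 : r₂.Prime) (hne : r₁ ≠ r₂)
    (hd1 : ℓ ∣ p ^ r₁ - 1) (hd2 : ℓ ∣ p ^ r₂ - 1) : ℓ ∣ p - 1 := by
  rw [aux_dvd_iff hp] at hd1 hd2
  rw [aux_dvd_iff_one hp]
  have ho1 : orderOf ((p : ZMod ℓ)) ∣ r₁ := orderOf_dvd_of_pow_eq_one hd1
  have ho2 : orderOf ((p : ZMod ℓ)) ∣ r₂ := orderOf_dvd_of_pow_eq_one hd2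
  have hco : Nat.Coprime r₁ r₂ := (Nat.coprime_primes h1 h2).mpr hne
  have : orderOf ((p : ZMod ℓ)) = 1 := Nat.eq_one_of_dvd_coprimes hco ho1 ho2
  rwa [orderOf_eq_one_iff] at this

lemma aux_term_dvd (z : ℤ) (t : ℕ) : z^2 ∣ (1+z)^t - (1 + t*z) := by
  induction t with
  | zero => simp
  | succ m ih =>
    have h1 : (1+z)^(m+1) - (1 + (m+1 : ℕ)*z)
        = ((1+z)^m - (1 + m*z)) * (1+z) + m * z^2 := by push_cast; ring
    rw [h1]
    exact dvd_add (ih.mul_right _) ⟨m, mul_comm _ _⟩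

lemma aux_not_sq_dvd {r : ℕ} (hr : r.Prime) (hodd : r ≠ 2) {z : ℤ} (hz : (r:ℤ) ∣ z) :
    ¬ ((r:ℤ)^2 ∣ ∑ t ∈ Finset.range r, (1+z)^t) := by
  intro hdvd
  have hsum : ∑ t ∈ Finset.range r, (1 + (t:ℤ)*z) = r + (∑ t ∈ Finset.range r, (t:ℤ)) * z := by
    rw [Finset.sum_add_distrib, ← Finset.sum_mul]; simp
  have htsum : (∑ t ∈ Finset.range r, (t:ℤ)) = ((r * ((r-1)/2) : ℕ) : ℤ) := by
    have h2 : (∑ t ∈ Finset.range r, t) * 2 = r * (r - 1) := Finset.sum_range_id_mul_two r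
    obtain ⟨k, hk⟩ := hr.odd_of_ne_two hodd
    have hk2 : (r-1)/2 = k := by omega
    have h4 : (∑ t ∈ Finset.range r, t) * 2 = (r * k) * 2 := by
      rw [h2, show r - 1 = 2*k by omega]; ring
    have : (∑ t ∈ Finset.range r, t) = r * ((r-1)/2) := by
      rw [hk2]; exact Nat.eq_of_mul_eq_mul_right (by norm_num) h4
    rw [← Nat.cast_sum, this]
  have hdz : (r:ℤ)^2 ∣ z^2 := pow_dvd_pow_of_dvd hz 2
  have hterm : (r:ℤ)^2 ∣ (∑ t ∈ Finset.range r, (1+z)^t) - (∑ t ∈ Finset.range r, (1 + (t:ℤ)*z)) := by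
    rw [← Finset.sum_sub_distrib]
    exact hdz.trans (Finset.dvd_sum fun t _ => aux_term_dvd z t)
  have h3 := hdvd.sub hterm
  rw [sub_sub_cancel, hsum, htsum] at h3
  have h4 : (r:ℤ)^2 ∣ ((r * ((r-1)/2) : ℕ) : ℤ) * z := by
    push_cast
    rw [sq, mul_assoc]
    exact mul_dvd_mul_left _ (hz.mul_left _)
  have h5 : (r:ℤ)^2 ∣ (r:ℤ) := (dvd_add_right h4).mp (by rwa [add_comm] at h3)
  have h6 : (r:ℤ)^2 ≤ r := Int.le_of_dvd (by exact_mod_cast hr.pos) h5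
  have h7 : (2:ℤ) ≤ r := by exact_mod_cast hr.two_le
  nlinarith


lemma aux_struct {p e ℓ : ℕ} (hℓ : ℓ.Prime) (he : 0 < e)
    (hdvd : (ℓ:ℤ) ∣ (Polynomial.cyclotomic e ℤ).eval (p:ℤ)) :
    ∃ m j, e = ℓ ^ j * m ∧ ¬ ℓ ∣ m ∧ IsPrimitiveRoot ((p : ZMod ℓ)) m := by
  haveI : Fact ℓ.Prime := ⟨hℓ⟩
  set v := e.factorization ℓ with hv
  set m := ordCompl[ℓ] e with hm
  have hem : e = ℓ ^ v * m := (Nat.ordProj_mul_ordCompl_eq_self e ℓ).symm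
  have hnd : ¬ ℓ ∣ m := Nat.not_dvd_ordCompl hℓ he.ne'
  haveI : NeZero ((m : ZMod ℓ)) := ⟨by
    rw [Ne, ZMod.natCast_eq_zero_iff]; exact hnd⟩
  have hroot : (Polynomial.cyclotomic e (ZMod ℓ)).IsRoot ((p : ZMod ℓ)) := by
    have h1 : (Polynomial.cyclotomic e (ZMod ℓ)).eval ((Int.castRingHom (ZMod ℓ)) (p:ℤ))
        = (Int.castRingHom (ZMod ℓ)) ((Polynomial.cyclotomic e ℤ).eval (p:ℤ)) := by
      rw [← map_cyclotomic e (Int.castRingHom (ZMod ℓ)), Polynomial.eval_map,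
        Polynomial.eval₂_at_apply]
    unfold Polynomial.IsRoot
    rw [show ((p : ZMod ℓ)) = (Int.castRingHom (ZMod ℓ)) (p:ℤ) from by simp, h1]
    have : (((Polynomial.cyclotomic e ℤ).eval (p:ℤ) : ℤ) : ZMod ℓ) = 0 := by
      rw [ZMod.intCast_zmod_eq_zero_iff_dvd]; exact hdvd
    exact this
  rw [hem] at hroot
  rw [Polynomial.isRoot_cyclotomic_prime_pow_mul_iff_of_charP] at hroot
  exact ⟨m, v, hem, hnd, hroot⟩

lemma aux_ord_dvd {p ℓ m : ℕ} (hℓ : ℓ.Prime) (h : IsPrimitiveRoot ((p : ZMod ℓ)) m)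
    (hm : 0 < m) : m ∣ ℓ - 1 := by
  haveI : Fact ℓ.Prime := ⟨hℓ⟩
  have hne : (p : ZMod ℓ) ≠ 0 := by
    intro h0
    have := h.pow_eq_one
    rw [h0, zero_pow hm.ne'] at this
    exact zero_ne_one this
  rw [h.eq_orderOf]
  exact orderOf_dvd_of_pow_eq_one (ZMod.pow_card_sub_one_eq_one hne)

/-- Let `q₁, …, q_k` be distinct primes, `I` a nonempty subset of `{1, …, k}`, and let
`e ≥ 3` be an integer. If `p` is a prime and `a_i (i ∈ I)` are positive integers with
`(p^e − 1)/(p − 1) = ∏_{i∈I} q_i^{a_i}`, then `e` divides `q_i − 1` for some `i ∈ I`,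
and `ω(e) ≤ |I| + 1`. -/
theorem stmt_10 (k : ℕ) (q : Fin k → ℕ) (hq : ∀ i, (q i).Prime)
    (hinj : Function.Injective q) (I : Finset (Fin k)) (hI : I.Nonempty)
    (e : ℕ) (he : 3 ≤ e) (p : ℕ) (hp : p.Prime) (a : Fin k → ℕ)
    (ha : ∀ i ∈ I, 0 < a i)
    (heq : (p ^ e - 1) / (p - 1) = ∏ i ∈ I, q i ^ a i) :
    (∃ i ∈ I, e ∣ q i - 1) ∧ e.primeFactors.card ≤ I.card + 1 := by
  classical
  have hp2 : 2 ≤ p := hp.two_le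
  set N := ∏ i ∈ I, q i ^ a i with hNdef
  have hdvd1 : p - 1 ∣ p ^ e - 1 := by simpa using Nat.sub_dvd_pow_sub_pow p 1 e
  have hN : p ^ e - 1 = (p - 1) * N := by
    rw [← heq]; exact (Nat.mul_div_cancel' hdvd1).symm
  have hfind : ∀ ℓ : ℕ, ℓ.Prime → ℓ ∣ N → ∃ i ∈ I, q i = ℓ := by
    intro ℓ hℓp hdv
    obtain ⟨i, hi, hdiv⟩ := hℓp.prime.exists_mem_finset_dvd hdv
    exact ⟨i, hi, ((Nat.prime_dvd_prime_iff_eq hℓp (hq i)).mp (hℓp.dvd_of_dvd_pow hdiv)).symm⟩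
  -- Part B preparation: for each odd prime r ∣ e, a special prime index
  have key : ∀ r ∈ e.primeFactors.erase 2, ∃ i ∈ I, q i ∣ p ^ r - 1 ∧ ¬ q i ∣ p - 1 := by
    intro r hrm
    have hr2 : r ≠ 2 := (Finset.mem_erase.mp hrm).1
    have hrp : r.Prime := Nat.prime_of_mem_primeFactors (Finset.mem_of_mem_erase hrm)
    have hre : r ∣ e := Nat.dvd_of_mem_primeFactors (Finset.mem_of_mem_erase hrm)
    have hr3 : 3 ≤ r := by have := hrp.two_le; omega
    set Sr : ℕ := ∑ t ∈ Finset.range r, p ^ t with hSrdef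
    have hgeom : (p - 1) * Sr = p ^ r - 1 := by
      have hZ : ((p:ℤ) - 1) * ∑ t ∈ Finset.range r, (p:ℤ)^t = (p:ℤ)^r - 1 := by
        rw [mul_comm]; exact geom_sum_mul _ r
      have h2 : ((p - 1 : ℕ) : ℤ) * ((Sr : ℕ) : ℤ) = ((p^r - 1 : ℕ) : ℤ) := by
        rw [Nat.cast_sub (by omega), Nat.cast_sub (Nat.one_le_pow _ _ (by omega))]
        push_cast [hSrdef]
        exact hZ
      exact_mod_cast h2
    have hSrdvdpr : Sr ∣ p ^ r - 1 := ⟨p - 1, by rw [← hgeom]; ring⟩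
    have hSdvdN : Sr ∣ N := by
      have h1 : p ^ r - 1 ∣ p ^ e - 1 := by
        obtain ⟨c, hc⟩ := hre
        have := Nat.sub_dvd_pow_sub_pow (p^r) 1 c
        simpa [← pow_mul, ← hc] using this
      have h2 : (p-1) * Sr ∣ (p-1) * N := by rw [hgeom, ← hN]; exact h1
      exact (mul_dvd_mul_iff_left (by omega : (p-1) ≠ 0)).mp h2
    -- Sr is large
    have hSrlb : 2 ^ (r-1) ≤ Sr := by
      calc 2 ^ (r-1) ≤ p ^ (r-1) := Nat.pow_le_pow_left hp2 _
      _ ≤ Sr := Finset.single_le_sum (f := fun t => p ^ t) (fun t _ => Nat.zero_le _)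
          (Finset.mem_range.mpr (by omega))
    have hSrgtr : r < Sr := lt_of_lt_of_le (aux_lt_two_pow_pred r hr3) hSrlb
    -- there is a prime divisor ℓ ≠ r of Sr
    have hex : ∃ ℓ, ℓ.Prime ∧ ℓ ∣ Sr ∧ ℓ ≠ r := by
      by_contra hcon
      push_neg at hcon
      have hall : ∀ {d : ℕ}, d.Prime → d ∣ Sr → d = r := fun hd hdv => hcon _ hd hdv
      have hSr0 : Sr ≠ 0 := by omega
      have hpow := Nat.eq_prime_pow_of_unique_prime_dvd hSr0 hall
      set s := Sr.primeFactorsList.length with hs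
      have hs1 : 1 ≤ s := by
        rcases Nat.eq_zero_or_pos s with h0 | h; · rw [h0, pow_zero] at hpow; omega
        · omega
      have hrS : r ∣ Sr := by rw [hpow]; exact dvd_pow_self r (by omega)
      -- p ≡ 1 mod r
      have hp1 : r ∣ p - 1 := by
        haveI : Fact r.Prime := ⟨hrp⟩
        have h1 : r ∣ p ^ r - 1 := hrS.trans hSrdvdpr
        rw [aux_dvd_iff (by omega)] at h1
        rw [aux_dvd_iff_one (by omega)]
        rw [← ZMod.pow_card ((p : ZMod r))]
        exact h1
      -- r^2 does not divide Sr
      have hnsq : ¬ r^2 ∣ Sr := by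
        intro hc
        apply aux_not_sq_dvd hrp hr2 (z := (p:ℤ) - 1)
        · have : ((r:ℕ):ℤ) ∣ ((p - 1 : ℕ) : ℤ) := Int.natCast_dvd_natCast.mpr hp1
          rwa [Nat.cast_sub (by omega)] at this
        · have hc2 : ((r^2 : ℕ) : ℤ) ∣ ((Sr : ℕ) : ℤ) := Int.natCast_dvd_natCast.mpr hc
          have heq2 : ∑ t ∈ Finset.range r, ((1:ℤ)+((p:ℤ)-1))^t = ((Sr:ℕ):ℤ) := by
            push_cast [hSrdef]
            ring_nf
          rw [heq2]
          exact_mod_cast hc2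
      -- contradiction
      rcases Nat.lt_or_ge s 2 with h | h
      · have : s = 1 := by omega
        rw [this, pow_one] at hpow; omega
      · exact hnsq (hpow ▸ pow_dvd_pow r h)
    obtain ⟨ℓ, hℓp, hℓS, hℓr⟩ := hex
    have hnd : ¬ ℓ ∣ p - 1 := by
      intro hc
      haveI : Fact ℓ.Prime := ⟨hℓp⟩
      rw [aux_dvd_iff_one (by omega)] at hc
      have h4 : ((Sr:ℕ) : ZMod ℓ) = (r : ZMod ℓ) := by
        rw [hSrdef]; push_cast; simp [hc]
      have h5 : ((r:ℕ) : ZMod ℓ) = 0 := by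
        rw [← h4]; exact (ZMod.natCast_eq_zero_iff _ _).mpr hℓS
      have h6 := (ZMod.natCast_eq_zero_iff _ _).mp h5
      exact hℓr ((Nat.prime_dvd_prime_iff_eq hℓp hrp).mp h6)
    obtain ⟨i, hiI, hqi⟩ := hfind ℓ hℓp (hℓS.trans hSdvdN)
    exact ⟨i, hiI, by rw [hqi]; exact hℓS.trans hSrdvdpr, by rw [hqi]; exact hnd⟩
  -- Part B conclusion
  obtain ⟨i0, hi0⟩ := hI
  have hB : e.primeFactors.card ≤ I.card + 1 := by
    have hchoice : ∀ r : ℕ, ∃ i : Fin k, r ∈ e.primeFactors.erase 2 →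
        i ∈ I ∧ q i ∣ p ^ r - 1 ∧ ¬ q i ∣ p - 1 := by
      intro r
      by_cases hr : r ∈ e.primeFactors.erase 2
      · obtain ⟨i, hi, h1, h2⟩ := key r hr
        exact ⟨i, fun _ => ⟨hi, h1, h2⟩⟩
      · exact ⟨i0, fun h => absurd h hr⟩
    choose f hf using hchoice
    have hcard : (e.primeFactors.erase 2).card ≤ I.card := by
      apply Finset.card_le_card_of_injOn f (fun r hr => (hf r hr).1)
      intro r1 h1 r2 h2 hfeq
      simp only [Finset.coe_mem, Finset.mem_coe] at h1 h2
      obtain ⟨hi1, hd1, hn1⟩ := hf r1 h1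
      obtain ⟨hi2, hd2, hn2⟩ := hf r2 h2
      by_contra hne
      have hr1p : r1.Prime := Nat.prime_of_mem_primeFactors (Finset.mem_of_mem_erase h1)
      have hr2p : r2.Prime := Nat.prime_of_mem_primeFactors (Finset.mem_of_mem_erase h2)
      rw [hfeq] at hd1
      exact hn2 (aux_gcd (by omega) hr1p hr2p hne hd1 hd2)
    have := Finset.pred_card_le_card_erase (s := e.primeFactors) (a := 2)
    omega
  refine ⟨?_, hB⟩
  by_cases h26 : p = 2 ∧ e = 6
  · obtain ⟨hp26, he6⟩ := h26
    have hN63 : N = 63 := by subst hp26; subst he6; norm_num at hN; omega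
    obtain ⟨i, hi, hqi⟩ := hfind 7 (by norm_num) (by rw [hN63]; norm_num)
    exact ⟨i, hi, by rw [hqi, he6]⟩
  · set c : ℕ → ℤ := fun d => (Polynomial.cyclotomic d ℤ).eval (p:ℤ) with hcdef
    have hppos : (1:ℤ) < (p:ℤ) := by exact_mod_cast hp2
    have hcpos : ∀ d, 0 < c d := fun d => Polynomial.cyclotomic_pos' d hppos
    have hprod : ∀ n : ℕ, 0 < n → ∏ d ∈ n.divisors, c d = (p:ℤ)^n - 1 := by
      intro n hn
      calc ∏ d ∈ n.divisors, c d
          = (∏ d ∈ n.divisors, Polynomial.cyclotomic d ℤ).eval (p:ℤ) := by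
            rw [Polynomial.eval_prod]
        _ = ((Polynomial.X^n - 1 : Polynomial ℤ)).eval (p:ℤ) := by
            rw [Polynomial.prod_cyclotomic_eq_X_pow_sub_one hn ℤ]
        _ = (p:ℤ)^n - 1 := by simp
    have he0 : 0 < e := by omega
    have hNZ : ((p:ℤ))^e - 1 = ((p:ℤ) - 1) * (N:ℤ) := by
      have hcast := congrArg (fun x : ℕ => (x:ℤ)) hN
      simp only [Nat.cast_sub (Nat.one_le_pow _ _ (by omega : 0 < p)),
        Nat.cast_sub (by omega : 1 ≤ p), Nat.cast_mul, Nat.cast_pow, Nat.cast_one] at hcast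
      exact hcast
    have hp1ne : ((p:ℤ) - 1) ≠ 0 := by linarith
    have hNeq : (N:ℤ) = ∏ d ∈ e.divisors.erase 1, c d := by
      have h1 : e.divisors = insert 1 (e.divisors.erase 1) :=
        (Finset.insert_erase (Nat.one_mem_divisors.mpr he0.ne')).symm
      have h2 := hprod e he0
      rw [h1, Finset.prod_insert (Finset.notMem_erase _ _)] at h2
      have hc1 : c 1 = (p:ℤ) - 1 := by simp [hcdef, Polynomial.cyclotomic_one]
      rw [hc1] at h2
      have h3 : ((p:ℤ) - 1) * ∏ d ∈ e.divisors.erase 1, c d = ((p:ℤ) - 1) * (N:ℤ) := by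
        rw [h2]; exact hNZ
      exact (mul_left_cancel₀ hp1ne h3).symm
    have hceN : c e ∣ (N:ℤ) := by
      rw [hNeq]
      exact Finset.dvd_prod_of_mem c (Finset.mem_erase.mpr
        ⟨by omega, Nat.mem_divisors.mpr ⟨dvd_refl e, he0.ne'⟩⟩)
    have hce2 : 2 ≤ (c e).natAbs := by
      have h1 : (p - 1) ^ e.totient < (c e).natAbs :=
        Polynomial.sub_one_pow_totient_lt_natAbs_cyclotomic_eval
          (n := e) (q := p) (by omega) (by omega)
      have h2 : 1 ≤ (p - 1) ^ e.totient := Nat.one_le_pow _ _ (by omega)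
      omega
    by_cases hexA : ∃ ℓ : ℕ, ℓ.Prime ∧ (ℓ:ℤ) ∣ c e ∧ ¬ ℓ ∣ e
    · obtain ⟨ℓ, hℓp, hℓc, hℓe⟩ := hexA
      obtain ⟨m, j, hem, hnm, hprim⟩ := aux_struct hℓp he0 hℓc
      have hj0 : j = 0 := by
        by_contra hj
        exact hℓe (hem ▸ Dvd.dvd.mul_right (dvd_pow_self ℓ hj) m)
      rw [hj0, pow_zero, one_mul] at hem
      rw [← hem] at hprim
      have hed : e ∣ ℓ - 1 := aux_ord_dvd hℓp hprim he0
      have hℓN : ℓ ∣ N := by exact_mod_cast hℓc.trans hceN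
      obtain ⟨i, hi, hqi⟩ := hfind ℓ hℓp hℓN
      exact ⟨i, hi, hqi ▸ hed⟩
    · exfalso
      push_neg at hexA
      set A := (c e).natAbs with hAdef
      have hAce : ((A:ℕ):ℤ) = c e := Int.natAbs_of_nonneg (hcpos e).le
      have hA2 : 2 ≤ A := hce2
      set ℓ := A.minFac with hldef
      have hℓp : ℓ.Prime := Nat.minFac_prime (by omega)
      have hℓA : ℓ ∣ A := Nat.minFac_dvd A
      have hℓc : (ℓ:ℤ) ∣ c e := by rw [← hAce]; exact_mod_cast hℓA
      have hℓe : ℓ ∣ e := hexA ℓ hℓp hℓc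
      have hℓN : ℓ ∣ N := by exact_mod_cast hℓc.trans hceN
      clear_value ℓ
      clear_value A
      obtain ⟨m, j, hem, hnm, hprim⟩ := aux_struct hℓp he0 hℓc
      have hm0 : 0 < m := by
        rcases Nat.eq_zero_or_pos m with h0 | h; · rw [h0, mul_zero] at hem; omega
        · exact h
      have hmdvd : m ∣ ℓ - 1 := aux_ord_dvd hℓp hprim hm0
      have hℓ2le := hℓp.two_le
      have hj1 : 1 ≤ j := by
        by_contra hj
        have : j = 0 := by omega
        rw [this, pow_zero, one_mul] at hem
        exact hnm (hem ▸ hℓe)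
      -- uniqueness of the prime divisor of A
      have hU : ∀ d : ℕ, d.Prime → d ∣ A → d = ℓ := by
        intro d hdp hdA
        by_contra hne
        have hdc : (d:ℤ) ∣ c e := by rw [← hAce]; exact_mod_cast hdA
        have hde : d ∣ e := hexA d hdp hdc
        obtain ⟨m', j', hem', hnm', hprim'⟩ := aux_struct hdp he0 hdc
        have hm'0 : 0 < m' := by
          rcases Nat.eq_zero_or_pos m' with h0 | h; · rw [h0, mul_zero] at hem'; omega
          · exact h
        have hm'dvd : m' ∣ d - 1 := aux_ord_dvd hdp hprim' hm'0
        have hj'1 : 1 ≤ j' := by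
          by_contra hj'
          have : j' = 0 := by omega
          rw [this, pow_zero, one_mul] at hem'
          exact hnm' (hem' ▸ hde)
        have hdm : d ∣ m := by
          have h1 : d ∣ ℓ^j * m := hem ▸ hde
          rcases (Nat.Prime.dvd_mul hdp).mp h1 with h | h
          · exact absurd ((Nat.prime_dvd_prime_iff_eq hdp hℓp).mp (hdp.dvd_of_dvd_pow h)) hne
          · exact h
        have hlm' : ℓ ∣ m' := by
          have h1 : ℓ ∣ d^j' * m' := hem' ▸ hℓe
          rcases (Nat.Prime.dvd_mul hℓp).mp h1 with h | h
          · exact absurd ((Nat.prime_dvd_prime_iff_eq hℓp hdp).mp (hℓp.dvd_of_dvd_pow h))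
              (Ne.symm hne)
          · exact h
        have h1 : d ≤ ℓ - 1 := Nat.le_of_dvd (by omega) (hdm.trans hmdvd)
        have h2 : ℓ ≤ d - 1 := Nat.le_of_dvd (by have := hdp.two_le; omega) (hlm'.trans hm'dvd)
        omega
      have hApow := Nat.eq_prime_pow_of_unique_prime_dvd (by omega : A ≠ 0)
        (fun {d} hd hdvd => hU d hd hdvd)
      -- Q and multiplicity one
      set f := e / ℓ with hfdef
      have hfe : f * ℓ = e := Nat.div_mul_cancel hℓe
      have hfval : f = ℓ^(j-1) * m := by
        have : f * ℓ = (ℓ^(j-1) * m) * ℓ := by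
          rw [hfe, hem]
          have : ℓ^(j-1) * ℓ = ℓ^j := by
            rw [← pow_succ]; congr 1; omega
          rw [mul_right_comm, this]
        exact Nat.eq_of_mul_eq_mul_right (by omega) this
      have hf1 : 1 ≤ f := by
        rcases Nat.eq_zero_or_pos f with h0 | h; · rw [h0, zero_mul] at hfe; omega
        · exact h
      have hflt : f < e := by
        rw [← hfe]; nlinarith
      set Q : ℤ := ∑ t ∈ Finset.range ℓ, ((p:ℤ)^f)^t with hQdef
      have hQml : Q * ((p:ℤ)^f - 1) = (p:ℤ)^e - 1 := by
        rw [hQdef, geom_sum_mul, ← pow_mul, hfe]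
      have hpf1 : (1:ℤ) < (p:ℤ)^f := one_lt_pow₀ hppos (by omega)
      have hpfne : (p:ℤ)^f - 1 ≠ 0 := by linarith
      have hQprod : Q = ∏ d ∈ e.divisors \ f.divisors, c d := by
        have hsub : f.divisors ⊆ e.divisors :=
          Nat.divisors_subset_of_dvd he0.ne' ⟨ℓ, hfe.symm⟩
        have hsd := Finset.prod_sdiff (f := c) hsub
        rw [hprod f hf1, hprod e he0] at hsd
        apply mul_right_cancel₀ hpfne
        rw [hQml, ← hsd]
      have hceQ : c e ∣ Q := by
        rw [hQprod]
        apply Finset.dvd_prod_of_mem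
        rw [Finset.mem_sdiff]
        refine ⟨Nat.mem_divisors.mpr ⟨dvd_refl e, he0.ne'⟩, fun hmem => ?_⟩
        have := Nat.divisor_le hmem
        omega
      have hℓsqQ : ¬ ((ℓ:ℤ)^2 ∣ Q) := by
        by_cases hℓ2 : ℓ = 2
        · -- ℓ = 2 : p odd, m = 1, f even, Q = 1 + p^f with p^f ≡ 1 mod 4
          have hpodd : p ≠ 2 := by
            intro hpe
            have hNodd : ¬ 2 ∣ N := by
              intro h2N
              have : 2 ∣ p ^ e - 1 := by rw [hN]; exact Dvd.dvd.mul_left h2N _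
              have hpe2 : 2 ∣ p ^ e := by
                rw [hpe]; exact dvd_pow_self 2 (by omega)
              have : (1:ℕ) ≤ p ^ e := Nat.one_le_pow _ _ (by omega)
              omega
            exact hNodd (hℓ2 ▸ hℓN)
          have hm1 : m = 1 := by
            have := Nat.le_of_dvd (by omega) hmdvd
            omega
          have hj2' : 2 ≤ j := by
            have he2j : e = 2^j := by rw [hem, hℓ2, hm1, mul_one]
            by_contra hj'
            have : j = 1 := by omega
            rw [this, pow_one] at he2j
            omega
          have hfeven : 2 ∣ f := by
            rw [hfval, hm1, mul_one, ← hℓ2]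
            exact dvd_pow_self ℓ (by omega)
          obtain ⟨u, hu⟩ := hfeven
          -- Q = 1 + p^f, p^f = (p^u)^2
          have hQeq : Q = 1 + ((p:ℤ)^u)^2 := by
            rw [hQdef, hℓ2, Finset.sum_range_succ, Finset.sum_range_one, hu]
            ring
          rw [hℓ2]
          intro hcon
          rw [hQeq] at hcon
          -- 4 ∣ 1 + x² with x odd : impossible
          have hxodd : Odd (p^u) := (hp.odd_of_ne_two hpodd).pow
          obtain ⟨w, hw⟩ := hxodd
          have hx : ((p:ℤ)^u) = 2*(w:ℤ) + 1 := by exact_mod_cast hw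
          rw [hx] at hcon
          have h4 : ((2:ℕ):ℤ)^2 = 4 := by norm_num
          rw [h4] at hcon
          have : (1 + (2*(w:ℤ)+1)^2) = 4*(w^2 + w) + 2 := by ring
          rw [this] at hcon
          obtain ⟨v, hv⟩ := hcon
          omega
        · -- ℓ odd
          have hz : (ℓ:ℤ) ∣ ((p:ℤ)^f - 1) := by
            have hmf : m ∣ f := by rw [hfval]; exact dvd_mul_left m _
            have hzf : ((p : ZMod ℓ))^f = 1 := by
              obtain ⟨u, hu⟩ := hmf
              rw [hu, pow_mul, hprim.pow_eq_one, one_pow]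
            have := (aux_dvd_iff (p := p) (r := f) (ℓ := ℓ) (by omega)).mpr hzf
            have hcast : ((ℓ:ℕ):ℤ) ∣ ((p^f - 1 : ℕ):ℤ) := Int.natCast_dvd_natCast.mpr this
            rwa [Nat.cast_sub (Nat.one_le_pow _ _ (by omega)), Nat.cast_pow, Nat.cast_one]
              at hcast
          intro hcon
          apply aux_not_sq_dvd hℓp hℓ2 hz
          have : ∑ t ∈ Finset.range ℓ, ((1:ℤ) + ((p:ℤ)^f - 1))^t = Q := by
            rw [hQdef]
            congr 1
            ext t
            ring_nf
          rw [this]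
          exact hcon
      have hsA : A = ℓ := by
        have hℓ2A : ¬ ℓ^2 ∣ A := by
          intro hcon
          apply hℓsqQ
          have h1 : ((ℓ^2 : ℕ):ℤ) ∣ ((A:ℕ):ℤ) := Int.natCast_dvd_natCast.mpr hcon
          rw [hAce] at h1
          push_cast at h1
          exact h1.trans hceQ
        rw [hApow] at hℓ2A hA2 ⊢
        set s := A.primeFactorsList.length
        have hs1 : 1 ≤ s := by
          by_contra hs
          have : s = 0 := by omega
          rw [this, pow_zero] at hA2; omega
        have hs2 : s < 2 := by
          by_contra hs
          exact hℓ2A (pow_dvd_pow ℓ (by omega))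
        have : s = 1 := by omega
        rw [this, pow_one]
      -- size contradictions
      have hφ : ℓ - 1 ≤ e.totient := by
        have h1 : Nat.totient ℓ ∣ Nat.totient e := Nat.totient_dvd_of_dvd hℓe
        have h2 : Nat.totient ℓ = ℓ - 1 := Nat.totient_prime hℓp
        exact h2 ▸ Nat.le_of_dvd (Nat.totient_pos.mpr he0) h1
      have hlb : (p - 1) ^ e.totient < A := by
        rw [hAdef]
        exact Polynomial.sub_one_pow_totient_lt_natAbs_cyclotomic_eval
          (n := e) (q := p) (by omega) (by omega)
      have hlbA : (p - 1) ^ e.totient < ℓ := by rw [← hsA]; exact hlb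
      by_cases hp3 : 3 ≤ p
      · have hb1 : 2^(e.totient) ≤ (p-1)^(e.totient) := Nat.pow_le_pow_left (by omega) _
        have hb2 : ℓ ≤ 2^(ℓ-1) := aux_le_two_pow_pred ℓ (by omega)
        have hb3 : (2:ℕ)^(ℓ-1) ≤ 2^(e.totient) := Nat.pow_le_pow_right (by norm_num) (by omega)
        omega
      · have hpe2 : p = 2 := by omega
        have hℓo : ℓ ≠ 2 := by
          intro h2
          have h1 : ℓ ∣ p ^ e - 1 := hℓN.trans ⟨p - 1, by rw [hN]; ring⟩
          rw [h2, hpe2] at h1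
          have hpe21 : 2 ∣ 2 ^ e := dvd_pow_self 2 (by omega)
          have : (1:ℕ) ≤ 2 ^ e := Nat.one_le_pow _ _ (by omega)
          omega
        have hm2 : 2 ≤ m := by
          by_contra hm'
          have hm1 : m = 1 := by omega
          rw [hm1] at hprim
          have h1 : ((p : ZMod ℓ)) = 1 := by
            have := hprim.pow_eq_one
            rwa [pow_one] at this
          have h2 : ℓ ∣ p - 1 := (aux_dvd_iff_one (by omega)).mpr h1
          have := Nat.le_of_dvd (by omega) h2
          rw [hpe2] at this
          omega
        by_cases hj2 : 2 ≤ j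
        · -- e = ℓ^j * m, j ≥ 2 : c e = Φ_f(p^ℓ)
          have hℓf : ℓ ∣ f := by
            rw [hfval]
            exact Dvd.dvd.mul_right (dvd_pow_self ℓ (by omega)) m
          have hexp := Polynomial.cyclotomic_expand_eq_cyclotomic hℓp hℓf ℤ
          have hce : c e = (Polynomial.cyclotomic f ℤ).eval (((p:ℤ))^ℓ) := by
            have h1 := congrArg (Polynomial.eval ((p:ℤ))) hexp
            rw [Polynomial.expand_eval, hfe] at h1
            exact h1.symm
          have hf2 : 1 < f := by
            rw [hfval]
            have h1 : ℓ ≤ ℓ^(j-1) := by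
              calc ℓ = ℓ^1 := (pow_one ℓ).symm
              _ ≤ ℓ^(j-1) := Nat.pow_le_pow_right (by omega) (by omega)
            calc 1 < ℓ := by omega
            _ ≤ ℓ^(j-1) := h1
            _ ≤ ℓ^(j-1) * m := Nat.le_mul_of_pos_right _ hm0
          have hlb2 := Polynomial.sub_one_pow_totient_lt_natAbs_cyclotomic_eval
            (n := f) (q := p^ℓ) hf2 (by
              have : 2^ℓ ≤ p^ℓ := Nat.pow_le_pow_left hp2 _
              have : (2:ℕ) ≤ 2^ℓ := by
                calc (2:ℕ) = 2^1 := (pow_one 2).symm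
                _ ≤ 2^ℓ := Nat.pow_le_pow_right (by norm_num) (by omega)
              omega)
          have hcast2 : (((p^ℓ : ℕ)):ℤ) = ((p:ℤ))^ℓ := by push_cast; rfl
          rw [hcast2, ← hce, ← hAdef, hsA] at hlb2
          have hb0 : 1 ≤ (2:ℕ)^(ℓ-1) := Nat.one_le_pow _ _ (by norm_num)
          -- (p^ℓ - 1)^φf < A = ℓ
          have hb1 : 2^ℓ - 1 ≤ (p^ℓ - 1)^(f.totient) := by
            have h1 : 2^ℓ ≤ p^ℓ := Nat.pow_le_pow_left hp2 _
            have h2 : 2^ℓ - 1 ≤ p^ℓ - 1 := by omega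
            calc 2^ℓ - 1 ≤ p^ℓ - 1 := h2
            _ ≤ (p^ℓ - 1)^(f.totient) := Nat.le_self_pow (Nat.totient_pos.mpr (by omega)).ne' _
          have hb2 : ℓ < 2^(ℓ-1) := aux_lt_two_pow_pred ℓ (by omega)
          have hb3 : (2:ℕ)^(ℓ-1) + 2^(ℓ-1) = 2^ℓ := by
            rw [← two_mul, ← pow_succ']
            congr 1
            omega
          omega
        · have hj1' : j = 1 := by omega
          have hem1 : e = ℓ * m := by rw [hem, hj1', pow_one]
          have hexp := Polynomial.cyclotomic_expand_eq_cyclotomic_mul hℓp hnm ℤ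
          have hev : (Polynomial.cyclotomic m ℤ).eval ((p:ℤ)^ℓ) = c e * c m := by
            have h1 := congrArg (Polynomial.eval ((p:ℤ))) hexp
            rw [Polynomial.expand_eval, Polynomial.eval_mul,
              show m * ℓ = e by rw [hem1]; ring] at h1
            exact h1
          have hceℓ : c e = (ℓ:ℤ) := by rw [← hAce, hsA]
          by_cases hm2' : m = 2
          · -- 2^ℓ + 1 = 3 ℓ forces ℓ = 3, e = 6, excluded
            have hc2 : c 2 = (p:ℤ) + 1 := by
              simp [hcdef, Polynomial.cyclotomic_two]
            rw [hm2'] at hev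
            rw [Polynomial.cyclotomic_two] at hev
            simp only [Polynomial.eval_add, Polynomial.eval_X, Polynomial.eval_one] at hev
            rw [hceℓ, hc2, hpe2] at hev
            -- hev : (2:ℤ)^ℓ + 1 = ℓ * ((2:ℤ) + 1)
            have hℓ3 : ℓ ≠ 3 := by
              intro h3
              exact h26 ⟨hpe2, by rw [hem1, h3, hm2']⟩
            have hℓ5 : 5 ≤ ℓ := by
              have h4 : ℓ ≠ 4 := by intro h4; rw [h4] at hℓp; norm_num at hℓp
              omega
            have hb := aux_four_mul_lt ℓ hℓ5
            have hev3 : 2^ℓ + 1 = ℓ * 3 := by exact_mod_cast hev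
            omega
          · have hm3 : 3 ≤ m := by omega
            set t := m.totient with htdef
            have ht2 : 2 ≤ t := by
              have hev' := Nat.totient_even (by omega : 2 < m)
              have hp' : 0 < t := Nat.totient_pos.mpr (by omega)
              obtain ⟨w, hw⟩ := hev'
              omega
            have hℓ5 : 5 ≤ ℓ := by
              have hm_le : m ≤ ℓ - 1 := Nat.le_of_dvd (by omega) hmdvd
              have h4 : ℓ ≠ 4 := by intro h4; rw [h4] at hℓp; norm_num at hℓp
              omega
            -- upper bound c m < 3^t via ℝ
            have hub : c m < (3:ℤ)^t := by
              have hreal := Polynomial.cyclotomic_eval_lt_add_one_pow_totient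
                (n := m) (q := (2:ℝ)) hm3 (by norm_num)
              have h0 := Polynomial.cyclotomic.eval_apply ((p:ℤ)) m (algebraMap ℤ ℝ)
              simp only [algebraMap_int_eq, eq_intCast] at h0
              rw [hpe2] at h0
              norm_num at h0
              rw [h0] at hreal
              have hcm2 : c m = Polynomial.eval (2:ℤ) (Polynomial.cyclotomic m ℤ) := by
                simp [hcdef, hpe2]
              have h1 : ((c m : ℤ):ℝ) < (((3:ℤ)^t : ℤ) : ℝ) := by
                push_cast
                calc ((c m : ℤ):ℝ) < ((2:ℝ) + 1)^t := by rw [hcm2, htdef]; exact hreal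
                _ = (3:ℝ)^t := by norm_num
              exact_mod_cast h1
            -- lower bound
            have hlb2 := Polynomial.sub_one_pow_totient_lt_natAbs_cyclotomic_eval
              (n := m) (q := p^ℓ) (by omega) (by
                have h1 : 2^ℓ ≤ p^ℓ := Nat.pow_le_pow_left hp2 _
                have h2 : (2:ℕ) ≤ 2^ℓ := by
                  calc (2:ℕ) = 2^1 := (pow_one 2).symm
                  _ ≤ 2^ℓ := Nat.pow_le_pow_right (by norm_num) (by omega)
                omega)
            have hcast2 : (((p^ℓ : ℕ)):ℤ) = ((p:ℤ))^ℓ := by push_cast; rfl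
            rw [hcast2, hev, hceℓ] at hlb2
            -- hlb2 : (p^ℓ - 1)^t < ((ℓ:ℤ) * c m).natAbs
            set B := (c m).natAbs with hBdef
            have hBc : ((B:ℕ):ℤ) = c m := Int.natAbs_of_nonneg (hcpos m).le
            have hnatAbs : ((ℓ:ℤ) * c m).natAbs = ℓ * B := by
              rw [Int.natAbs_mul, Int.natAbs_natCast]
            rw [hnatAbs] at hlb2
            have hBub : B < 3^t := by
              have : ((B:ℕ):ℤ) < ((3^t : ℕ):ℤ) := by rw [hBc]; push_cast; exact_mod_cast hub
              exact_mod_cast this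
            -- (p^ℓ - 1)^t < ℓ * B < ℓ * 3^t ; p = 2
            rw [hpe2] at hlb2
            have hkey : (2^ℓ - 1)^t < ℓ * 3^t := by
              calc (2^ℓ - 1)^t < ℓ * B := hlb2
              _ ≤ ℓ * 3^t := Nat.mul_le_mul_left _ (by omega)
            have hge : 3 * 2^(ℓ-2) ≤ 2^ℓ - 1 := by
              have h1 : (2:ℕ)^ℓ = 4 * 2^(ℓ-2) := by
                rw [show (4:ℕ) = 2^2 by norm_num, ← pow_add]
                congr 1
                omega
              have h2 : (1:ℕ) ≤ 2^(ℓ-2) := Nat.one_le_pow _ _ (by norm_num)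
              omega
            have hkey2 : 3^t * (2^(ℓ-2))^t < ℓ * 3^t := by
              calc 3^t * (2^(ℓ-2))^t = (3 * 2^(ℓ-2))^t := by rw [mul_pow]
              _ ≤ (2^ℓ - 1)^t := Nat.pow_le_pow_left hge _
              _ < ℓ * 3^t := hkey
            have hkey3 : (2:ℕ)^((ℓ-2)*t) < ℓ := by
              have h1 : 3^t * (2^(ℓ-2))^t < 3^t * ℓ := by
                rw [mul_comm ℓ (3^t)] at hkey2; exact hkey2
              have h2 := Nat.lt_of_mul_lt_mul_left h1
              rwa [← pow_mul] at h2
            have hfin1 : ℓ - 1 ≤ (ℓ-2)*t := by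
              have h1 : (ℓ-2)*2 ≤ (ℓ-2)*t := Nat.mul_le_mul_left _ ht2
              omega
            have hfin2 : ℓ ≤ 2^(ℓ-1) := aux_le_two_pow_pred ℓ (by omega)
            have hfin3 : (2:ℕ)^(ℓ-1) ≤ 2^((ℓ-2)*t) := Nat.pow_le_pow_right (by norm_num) hfin1
            omega
end
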